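/- arXiv:1710.07069 — 3 statements merged into one kernel-verified Lean document; each statement's English description precedes it below -/
import Mathlib

section
/- Let a, β : [0,∞) → ℝ be continuous with β continuously differentiable, let λ > 0, and let f : [0,∞) → ℝ be continuously differentiable. Suppose z : [0,∞) → ℝ is the mode resolvent, i.e. z is continuously differentiable, z(0) = 1, and for all t ≥ 0: z'(t) + β(0)z(t) + ∫₀ᵗ β'(t−s)z(s) ds = −λ² ∫₀ᵗ a(t−s)z(s) ds. Then for all t ≥ 0: λ² ∫₀ᵗ z(t−s) (∫₀ˢ a(s−r)f(r) dr) ds = f(t) − f(0)·(z(t) + ∫₀ᵗ β(t−r)z(r) dr) − ∫₀ᵗ f'(t−s)·(z(s) + ∫₀ˢ β(s−r)z(r) dr) ds. -/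
/-!
Write `(g ⋆ h) t = ∫₀ᵗ g (t - s) h s ds`. Integrating the mode equation over `[0, t]`, and computing
`∫₀ᵗ β' ⋆ z = (β - β 0) ⋆ z` by Fubini, shows that `W = z + β ⋆ z` satisfies
`W t = 1 - λ² ∫₀ᵗ a ⋆ z`, i.e. `W' = -λ² (a ⋆ z)` and `W 0 = 1`. Since `⋆` is commutative and
associative, `λ² z ⋆ (a ⋆ f) = λ² (a ⋆ z) ⋆ f = -W' ⋆ f`, and one integration by parts moves the
derivative from `W` onto `f`.
-/

open MeasureTheory Set intervalIntegral

theorem ContinuousOn.continuous_comp_max_zero {g : ℝ → ℝ} (hg : ContinuousOn g (Ici 0)) :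
    Continuous fun x => g (max x 0) :=
  hg.comp_continuous (by fun_prop) fun x => le_max_right x 0

theorem eqOn_comp_max_zero (g : ℝ → ℝ) : EqOn (fun x => g (max x 0)) g (Ici 0) :=
  fun x hx => by simp only [max_eq_left (mem_Ici.1 hx)]

theorem intervalIntegral_triangle_swap {G : ℝ → ℝ → ℝ} (hG : Continuous G.uncurry) {t : ℝ}
    (ht : 0 ≤ t) :
    ∫ σ in (0:ℝ)..t, ∫ s in (0:ℝ)..σ, G σ s = ∫ s in (0:ℝ)..t, ∫ σ in s..t, G σ s := by
  -- both sides are the integral over the square `[0, t]²` of `G` cut off to the triangle `s ≤ σ`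
  set H : ℝ → ℝ → ℝ := fun σ => {s | s ≤ σ}.indicator (G σ)
  have hH : IntegrableOn H.uncurry (uIoc 0 t ×ˢ uIoc 0 t) := by
    have hG' : IntegrableOn G.uncurry (uIoc 0 t ×ˢ uIoc 0 t) :=
      (hG.continuousOn.integrableOn_compact (isCompact_uIcc.prod isCompact_uIcc)).mono_set
        (prod_mono uIoc_subset_uIcc uIoc_subset_uIcc)
    exact hG'.indicator (measurableSet_le measurable_snd measurable_fst)
  have hleft : ∀ σ ∈ uIcc 0 t, ∫ s in (0:ℝ)..σ, G σ s = ∫ s in (0:ℝ)..t, H σ s := by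
    intro σ hσ
    rw [uIcc_of_le ht] at hσ
    exact (intervalIntegral.integral_indicator hσ).symm
  have hright : ∀ s ∈ uIcc 0 t, ∫ σ in s..t, G σ s = ∫ σ in (0:ℝ)..t, H σ s := by
    intro s hs
    rw [uIcc_of_le ht] at hs
    have hrefl : ∀ τ, H (t - τ) s = {τ | τ ≤ t - s}.indicator (fun τ => G (t - τ) s) τ := by
      intro τ
      simp only [H, indicator_apply, mem_ofPred_eq, le_sub_comm]
    have := integral_comp_sub_left (fun σ => H σ s) t (a := 0) (b := t)
    simp only [sub_self, sub_zero] at this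
    rw [← this, integral_congr (fun τ _ => hrefl τ),
      intervalIntegral.integral_indicator ⟨by linarith [hs.2], by linarith [hs.1]⟩,
      integral_comp_sub_left (fun σ => G σ s), sub_sub_cancel, sub_zero]
  rw [integral_congr hleft, integral_congr hright, intervalIntegral_intervalIntegral_swap hH]

theorem integral_eq_sub_of_hasDerivWithinAt_Ici {g g' : ℝ → ℝ}
    (hg : ∀ x ∈ Ici (0:ℝ), HasDerivWithinAt g (g' x) (Ici 0) x) (hg' : ContinuousOn g' (Ici 0))
    {t : ℝ} (ht : 0 ≤ t) : ∫ x in (0:ℝ)..t, g' x = g t - g 0 :=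
  integral_eq_sub_of_hasDeriv_right_of_le ht
    (fun x hx => (hg x hx.1).continuousWithinAt.mono Icc_subset_Ici_self)
    (fun x hx => (hg x hx.1.le).mono fun _ hy => hx.1.le.trans (le_of_lt hy))
    ((hg'.mono Icc_subset_Ici_self).intervalIntegrable_of_Icc ht)

theorem hasDerivWithinAt_integral_Ici {k : ℝ → ℝ} (hk : ContinuousOn k (Ici 0)) {x : ℝ}
    (hx : 0 ≤ x) : HasDerivWithinAt (fun y => ∫ s in (0:ℝ)..y, k s) (k x) (Ici 0) x := by
  have hk' := hk.continuous_comp_max_zero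
  have hprim := integral_hasDerivAt_right (hk'.intervalIntegrable 0 x)
    (hk'.stronglyMeasurableAtFilter _ _) hk'.continuousAt
  have hcongr : EqOn (fun y => ∫ s in (0:ℝ)..y, k s)
      (fun y => ∫ s in (0:ℝ)..y, k (max s 0)) (Ici 0) := fun y hy =>
    integral_congr fun s hs => by
      rw [uIcc_of_le hy] at hs
      exact (eqOn_comp_max_zero k hs.1).symm
  rw [max_eq_left hx] at hprim
  exact hprim.hasDerivWithinAt.congr hcongr (hcongr hx)

noncomputable def laplaceConv (g h : ℝ → ℝ) (t : ℝ) : ℝ :=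
  ∫ s in (0:ℝ)..t, g (t - s) * h s

theorem laplaceConv_comm (g h : ℝ → ℝ) (t : ℝ) : laplaceConv g h t = laplaceConv h g t := by
  have := integral_comp_sub_left (fun u => g u * h (t - u)) t (a := 0) (b := t)
  simp only [sub_sub_cancel, sub_self, sub_zero] at this
  rw [laplaceConv, laplaceConv, this]
  simp only [mul_comm]

theorem laplaceConv_const_left (c : ℝ) (h : ℝ → ℝ) (t : ℝ) :
    laplaceConv (fun _ => c) h t = c * ∫ s in (0:ℝ)..t, h s :=
  intervalIntegral.integral_const_mul c h

theorem laplaceConv_const_mul_left (c : ℝ) (g h : ℝ → ℝ) (t : ℝ) :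
    laplaceConv (fun x => c * g x) h t = c * laplaceConv g h t := by
  simp only [laplaceConv, mul_assoc, intervalIntegral.integral_const_mul]

theorem laplaceConv_congr {g₁ g₂ h₁ h₂ : ℝ → ℝ} (hg : EqOn g₁ g₂ (Ici 0))
    (hh : EqOn h₁ h₂ (Ici 0)) : EqOn (laplaceConv g₁ h₁) (laplaceConv g₂ h₂) (Ici 0) := by
  intro t ht
  refine integral_congr fun s hs => ?_
  rw [uIcc_of_le ht] at hs
  simp only [hg (sub_nonneg.2 hs.2), hh hs.1]

theorem continuousOn_laplaceConv_integrand {g h : ℝ → ℝ} (hg : ContinuousOn g (Ici 0))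
    (hh : ContinuousOn h (Ici 0)) {t : ℝ} (ht : 0 ≤ t) :
    ContinuousOn (fun s => g (t - s) * h s) (uIcc 0 t) := by
  rw [uIcc_of_le ht]
  exact (hg.comp (continuousOn_const.sub continuousOn_id) fun s hs => sub_nonneg.2 hs.2).mul
    (hh.mono Icc_subset_Ici_self)

theorem laplaceConv_add_left {g₁ g₂ h : ℝ → ℝ} (hg₁ : ContinuousOn g₁ (Ici 0))
    (hg₂ : ContinuousOn g₂ (Ici 0)) (hh : ContinuousOn h (Ici 0)) {t : ℝ} (ht : 0 ≤ t) :
    laplaceConv (g₁ + g₂) h t = laplaceConv g₁ h t + laplaceConv g₂ h t := by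
  simp only [laplaceConv, Pi.add_apply, add_mul]
  exact integral_add (continuousOn_laplaceConv_integrand hg₁ hh ht).intervalIntegrable
    (continuousOn_laplaceConv_integrand hg₂ hh ht).intervalIntegrable

theorem continuous_laplaceConv {g h : ℝ → ℝ} (hg : Continuous g) (hh : Continuous h) :
    Continuous (laplaceConv g h) :=
  continuous_parametric_intervalIntegral_of_continuous (by fun_prop) continuous_id

theorem continuousOn_laplaceConv {g h : ℝ → ℝ} (hg : ContinuousOn g (Ici 0))
    (hh : ContinuousOn h (Ici 0)) : ContinuousOn (laplaceConv g h) (Ici 0) :=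
  (continuous_laplaceConv hg.continuous_comp_max_zero
    hh.continuous_comp_max_zero).continuousOn.congr
    (laplaceConv_congr (eqOn_comp_max_zero g) (eqOn_comp_max_zero h)).symm

theorem laplaceConv_assoc_of_continuous {g h k : ℝ → ℝ} (hg : Continuous g) (hh : Continuous h)
    (hk : Continuous k) {t : ℝ} (ht : 0 ≤ t) :
    laplaceConv g (laplaceConv h k) t = laplaceConv (laplaceConv g h) k t := by
  calc laplaceConv g (laplaceConv h k) t
      = ∫ s in (0:ℝ)..t, ∫ r in (0:ℝ)..s, g (t - s) * (h (s - r) * k r) := by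
        simp only [laplaceConv, intervalIntegral.integral_const_mul]
    _ = ∫ r in (0:ℝ)..t, ∫ s in r..t, g (t - s) * (h (s - r) * k r) :=
        intervalIntegral_triangle_swap (G := fun s r => g (t - s) * (h (s - r) * k r))
          (by fun_prop) ht
    _ = laplaceConv (laplaceConv g h) k t := by
        refine integral_congr fun r _ => ?_
        have := integral_comp_sub_right (fun u => g (t - r - u) * h u) r (a := r) (b := t)
        simp only [sub_sub_sub_cancel_right, sub_self] at this
        simp only [laplaceConv, ← this, ← intervalIntegral.integral_mul_const, mul_assoc]

theorem laplaceConv_assoc {g h k : ℝ → ℝ} (hg : ContinuousOn g (Ici 0))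
    (hh : ContinuousOn h (Ici 0)) (hk : ContinuousOn k (Ici 0)) {t : ℝ} (ht : 0 ≤ t) :
    laplaceConv g (laplaceConv h k) t = laplaceConv (laplaceConv g h) k t := by
  have eg := eqOn_comp_max_zero g
  have eh := eqOn_comp_max_zero h
  have ek := eqOn_comp_max_zero k
  rw [← laplaceConv_congr eg (laplaceConv_congr eh ek) ht,
    ← laplaceConv_congr (laplaceConv_congr eg eh) ek ht]
  exact laplaceConv_assoc_of_continuous hg.continuous_comp_max_zero hh.continuous_comp_max_zero
    hk.continuous_comp_max_zero ht

theorem integral_laplaceConv {g h : ℝ → ℝ} (hg : ContinuousOn g (Ici 0))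
    (hh : ContinuousOn h (Ici 0)) {t : ℝ} (ht : 0 ≤ t) :
    ∫ s in (0:ℝ)..t, laplaceConv g h s = laplaceConv (fun x => ∫ s in (0:ℝ)..x, g s) h t := by
  have hprim : laplaceConv (fun _ => 1) g = fun x => ∫ s in (0:ℝ)..x, g s :=
    funext fun x => by rw [laplaceConv_const_left, one_mul]
  have := laplaceConv_assoc continuousOn_const hg hh ht (g := fun _ => (1:ℝ))
  rwa [hprim, laplaceConv_const_left, one_mul] at this

theorem laplaceConv_deriv_left_eq {w w' f f' : ℝ → ℝ}
    (hw : ∀ x ∈ Ici (0:ℝ), HasDerivWithinAt w (w' x) (Ici 0) x) (hw' : ContinuousOn w' (Ici 0))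
    (hf : ∀ x ∈ Ici (0:ℝ), HasDerivWithinAt f (f' x) (Ici 0) x) (hf' : ContinuousOn f' (Ici 0))
    {t : ℝ} (ht : 0 ≤ t) :
    laplaceConv w' f t = w t * f 0 - w 0 * f t + laplaceConv w f' t := by
  have hsub : uIcc 0 t ⊆ Ici 0 := uIcc_of_le ht ▸ Icc_subset_Ici_self
  have hrefl : MapsTo (fun s => t - s) (uIcc 0 t) (uIcc 0 t) := fun s hs => by
    rw [uIcc_of_le ht] at hs ⊢
    exact ⟨by linarith [hs.2], by linarith [hs.1]⟩
  have hu : ∀ s ∈ uIcc 0 t,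
      HasDerivWithinAt (fun s => w (t - s)) (-w' (t - s)) (uIcc 0 t) s := fun s hs => by
    simpa [Function.comp_def] using ((hw _ (hsub (hrefl hs))).mono hsub).comp s
      ((hasDerivAt_id s).const_sub t).hasDerivWithinAt hrefl
  have hu' : IntervalIntegrable (fun s => -w' (t - s)) volume 0 t :=
    ((hw'.mono hsub).comp (continuousOn_const.sub continuousOn_id) hrefl).neg.intervalIntegrable
  have hparts := integral_mul_deriv_eq_deriv_mul_of_hasDerivWithinAt hu
    (fun s hs => (hf s (hsub hs)).mono hsub) hu' (hf'.mono hsub).intervalIntegrable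
  simp only [sub_self, sub_zero, neg_mul, intervalIntegral.integral_neg] at hparts
  simp only [laplaceConv]
  linarith

theorem add_laplaceConv_eq_one_sub_integral_laplaceConv {a β β' z z' : ℝ → ℝ} {lam : ℝ}
    (hβ : ∀ x ∈ Ici (0:ℝ), HasDerivWithinAt β (β' x) (Ici 0) x) (hβ' : ContinuousOn β' (Ici 0))
    (hz : ∀ x ∈ Ici (0:ℝ), HasDerivWithinAt z (z' x) (Ici 0) x) (hz' : ContinuousOn z' (Ici 0))
    (hz0 : z 0 = 1)
    (hzeq : ∀ t ≥ (0:ℝ), z' t + β 0 * z t + laplaceConv β' z t = -lam ^ 2 * laplaceConv a z t)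
    {t : ℝ} (ht : 0 ≤ t) :
    z t + laplaceConv β z t = 1 - lam ^ 2 * ∫ s in (0:ℝ)..t, laplaceConv a z s := by
  have hsub : uIcc 0 t ⊆ Ici 0 := uIcc_of_le ht ▸ Icc_subset_Ici_self
  have hzc : ContinuousOn z (Ici 0) := fun x hx => (hz x hx).continuousWithinAt
  have hβprim : ContinuousOn (fun x => ∫ s in (0:ℝ)..x, β' s) (Ici 0) := fun x hx =>
    (hasDerivWithinAt_integral_Ici hβ' hx).continuousWithinAt
  have hβ_eq : EqOn ((fun _ => β 0) + fun x => ∫ s in (0:ℝ)..x, β' s) β (Ici 0) := fun x hx => by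
    simp [integral_eq_sub_of_hasDerivWithinAt_Ici hβ hβ' hx]
  have hconv : β 0 * (∫ s in (0:ℝ)..t, z s) + laplaceConv (fun x => ∫ s in (0:ℝ)..x, β' s) z t
      = laplaceConv β z t := by
    rw [← laplaceConv_const_left, ← laplaceConv_add_left continuousOn_const hβprim hzc ht,
      laplaceConv_congr hβ_eq (fun _ _ => rfl) ht]
  have hintegrated : ∫ s in (0:ℝ)..t, (z' s + β 0 * z s + laplaceConv β' z s)
      = ∫ s in (0:ℝ)..t, -lam ^ 2 * laplaceConv a z s :=
    integral_congr fun s hs => hzeq s (hsub hs)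
  have hint : ∀ {g : ℝ → ℝ}, ContinuousOn g (Ici 0) → IntervalIntegrable g volume 0 t :=
    fun hg => (hg.mono hsub).intervalIntegrable
  rw [integral_add (hint (g := fun s => z' s + β 0 * z s) (hz'.add (continuousOn_const.mul hzc)))
      (hint (continuousOn_laplaceConv hβ' hzc)),
    integral_add (hint hz') (hint (g := fun s => β 0 * z s) (continuousOn_const.mul hzc)),
    intervalIntegral.integral_const_mul, intervalIntegral.integral_const_mul,
    integral_eq_sub_of_hasDerivWithinAt_Ici hz hz' ht, hz0, integral_laplaceConv hβ' hzc ht]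
    at hintegrated
  linarith

theorem stmt_1_general
    (a β β' : ℝ → ℝ) (lam : ℝ) (f f' z z' : ℝ → ℝ)
    (ha : ContinuousOn a (Set.Ici 0))
    (hβderiv : ∀ t ∈ Set.Ici (0:ℝ), HasDerivWithinAt β (β' t) (Set.Ici 0) t)
    (hβ'cont : ContinuousOn β' (Set.Ici 0))
    (hfderiv : ∀ t ∈ Set.Ici (0:ℝ), HasDerivWithinAt f (f' t) (Set.Ici 0) t)
    (hf'cont : ContinuousOn f' (Set.Ici 0))
    (hzderiv : ∀ t ∈ Set.Ici (0:ℝ), HasDerivWithinAt z (z' t) (Set.Ici 0) t)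
    (hz'cont : ContinuousOn z' (Set.Ici 0))
    (hz0 : z 0 = 1)
    (hzeq : ∀ t ≥ (0:ℝ),
      z' t + β 0 * z t + (∫ s in (0:ℝ)..t, β' (t - s) * z s)
        = -lam ^ 2 * ∫ s in (0:ℝ)..t, a (t - s) * z s) :
    ∀ t ≥ (0:ℝ),
      lam ^ 2 * ∫ s in (0:ℝ)..t, z (t - s) * ∫ r in (0:ℝ)..s, a (s - r) * f r
        = f t - f 0 * (z t + ∫ r in (0:ℝ)..t, β (t - r) * z r)
          - ∫ s in (0:ℝ)..t, f' (t - s) * (z s + ∫ r in (0:ℝ)..s, β (s - r) * z r) := by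
  intro t ht
  have hz : ContinuousOn z (Ici 0) := fun x hx => (hzderiv x hx).continuousWithinAt
  have hf : ContinuousOn f (Ici 0) := fun x hx => (hfderiv x hx).continuousWithinAt
  have hK := continuousOn_laplaceConv ha hz
  set w : ℝ → ℝ := fun x => 1 - lam ^ 2 * ∫ s in (0:ℝ)..x, laplaceConv a z s
  have hW : EqOn w (fun x => z x + laplaceConv β z x) (Ici 0) := fun x hx =>
    (add_laplaceConv_eq_one_sub_integral_laplaceConv hβderiv hβ'cont hzderiv hz'cont hz0 hzeq
      hx).symm
  have hw0 : w 0 = 1 := by simp [w]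
  have hparts := laplaceConv_deriv_left_eq (w := w)
    (fun x hx => ((hasDerivWithinAt_integral_Ici hK hx).const_mul (lam ^ 2)).const_sub 1)
    (hK.const_mul (lam ^ 2)).neg hfderiv hf'cont ht
  rw [hw0, hW ht, laplaceConv_congr hW (fun _ _ => rfl) ht, laplaceConv_comm _ f'] at hparts
  show lam ^ 2 * laplaceConv z (laplaceConv a f) t
    = f t - f 0 * (z t + laplaceConv β z t) - laplaceConv f' (fun s => z s + laplaceConv β z s) t
  rw [laplaceConv_assoc hz ha hf ht, funext (laplaceConv_comm z a)]
  simp only [← neg_mul, laplaceConv_const_mul_left] at hparts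
  linarith

theorem stmt_1
    (a β β' : ℝ → ℝ) (lam : ℝ) (f f' z z' : ℝ → ℝ)
    (ha : ContinuousOn a (Set.Ici 0))
    (hβcont : ContinuousOn β (Set.Ici 0))
    (hβderiv : ∀ t ∈ Set.Ici (0:ℝ), HasDerivWithinAt β (β' t) (Set.Ici 0) t)
    (hβ'cont : ContinuousOn β' (Set.Ici 0))
    (hlam : 0 < lam)
    (hfderiv : ∀ t ∈ Set.Ici (0:ℝ), HasDerivWithinAt f (f' t) (Set.Ici 0) t)
    (hf'cont : ContinuousOn f' (Set.Ici 0))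
    (hzderiv : ∀ t ∈ Set.Ici (0:ℝ), HasDerivWithinAt z (z' t) (Set.Ici 0) t)
    (hz'cont : ContinuousOn z' (Set.Ici 0))
    (hz0 : z 0 = 1)
    (hzeq : ∀ t ≥ (0:ℝ),
      z' t + β 0 * z t + (∫ s in (0:ℝ)..t, β' (t - s) * z s)
        = -lam ^ 2 * ∫ s in (0:ℝ)..t, a (t - s) * z s) :
    ∀ t ≥ (0:ℝ),
      lam ^ 2 * ∫ s in (0:ℝ)..t, z (t - s) * ∫ r in (0:ℝ)..s, a (s - r) * f r
        = f t - f 0 * (z t + ∫ r in (0:ℝ)..t, β (t - r) * z r)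
          - ∫ s in (0:ℝ)..t, f' (t - s) * (z s + ∫ r in (0:ℝ)..s, β (s - r) * z r) :=
  stmt_1_general a β β' lam f f' z z' ha hβderiv hβ'cont hfderiv hf'cont hzderiv hz'cont hz0 hzeq
end

section
/- Let L > 0, C > 0, λₙ = (n + 1/2)π/L, and let (ξₙ)_{n≥1} be a square-summable sequence of real numbers. Suppose zₙ : [0,L] → ℝ are continuous functions of the form zₙ(t) = cos(λₙ t) + Mₙ(t)/λₙ, where each Mₙ is continuous and |Mₙ(t)| ≤ C for all n and all t ∈ [0,L]. Then the series ∑_{n=1}^∞ (−1)ⁿ ξₙ zₙ converges in L²(0,L), i.e. the partial sums ∑_{n=1}^N (−1)ⁿ ξₙ zₙ form a Cauchy sequence in L²(0,L). -/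
/-!
Split each mode as `zₙ = cos (λₙ ·) + Mₙ / λₙ`. On `[0, L]` the functions `cos (λₙ ·)` are
orthogonal with squared norm `L / 2`, since `(λₘ ± λₙ) L` is an integer multiple of `π`; so the
cosine part of a block `∑_{N₂ < n ≤ N₁} cₙ zₙ` has energy `(L / 2) ∑ cₙ²` exactly. By
Cauchy–Schwarz the remainder is bounded pointwise by `C² (∑ cₙ²)(∑ λₙ⁻²)`, and `∑ λₙ⁻² < ∞`.
Hence the energy of the block is at most a fixed multiple of the tail `∑_{N₂ < n ≤ N₁} ξₙ²`.
-/

open Real Finset MeasureTheory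

theorem integral_sq_sum_of_orthogonal {ι : Type*} [DecidableEq ι] (s : Finset ι) {a b K : ℝ}
    {φ : ι → ℝ → ℝ}
    (hφ : ∀ i ∈ s, ∀ j ∈ s, IntervalIntegrable (fun t => φ i t * φ j t) volume a b)
    (horth : ∀ i ∈ s, ∀ j ∈ s, ∫ t in a..b, φ i t * φ j t = if i = j then K else 0)
    (c : ι → ℝ) :
    ∫ t in a..b, (∑ i ∈ s, c i * φ i t) ^ 2 = K * ∑ i ∈ s, c i ^ 2 := by
  have hexpand : ∀ t, (∑ i ∈ s, c i * φ i t) ^ 2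
      = ∑ i ∈ s, ∑ j ∈ s, c i * c j * (φ i t * φ j t) := fun t => by
    rw [sq, sum_mul_sum]
    exact sum_congr rfl fun i _ => sum_congr rfl fun j _ => by ring
  have hint : ∀ i ∈ s, ∀ j ∈ s,
      IntervalIntegrable (fun t => c i * c j * (φ i t * φ j t)) volume a b :=
    fun i hi j hj => (hφ i hi j hj).const_mul _
  simp_rw [hexpand]
  rw [intervalIntegral.integral_finsetSum fun i hi => by
    simpa only [sum_fn] using IntervalIntegrable.sum s (hint i hi)]
  calc ∑ i ∈ s, ∫ t in a..b, ∑ j ∈ s, c i * c j * (φ i t * φ j t)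
      = ∑ i ∈ s, ∑ j ∈ s, c i * c j * (if i = j then K else 0) := by
        refine sum_congr rfl fun i hi => ?_
        rw [intervalIntegral.integral_finsetSum (hint i hi)]
        exact sum_congr rfl fun j hj => by
          rw [intervalIntegral.integral_const_mul, horth i hi j hj]
    _ = K * ∑ i ∈ s, c i ^ 2 := by
        simp only [mul_ite, mul_zero, sum_ite_eq, mul_sum]
        exact sum_congr rfl fun i hi => by simp only [if_pos hi]; ring

theorem sq_sum_mul_div_le {ι : Type*} (s : Finset ι) {c m l : ι → ℝ} {C : ℝ}
    (hm : ∀ i ∈ s, |m i| ≤ C) :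
    (∑ i ∈ s, c i * (m i / l i)) ^ 2 ≤ C ^ 2 * (∑ i ∈ s, c i ^ 2) * ∑ i ∈ s, (l i)⁻¹ ^ 2 := by
  have habs : |∑ i ∈ s, c i * (m i / l i)| ≤ C * ∑ i ∈ s, |c i| * |l i|⁻¹ := by
    rw [mul_sum]
    refine (abs_sum_le_sum_abs _ _).trans (sum_le_sum fun i hi => ?_)
    rw [abs_mul, abs_div, div_eq_mul_inv]
    nlinarith [hm i hi, mul_nonneg (abs_nonneg (c i)) (inv_nonneg.2 (abs_nonneg (l i)))]
  have hCS := sum_mul_sq_le_sq_mul_sq s (fun i => |c i|) (fun i => |l i|⁻¹)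
  simp only [sq_abs, inv_pow] at hCS
  calc (∑ i ∈ s, c i * (m i / l i)) ^ 2 = |∑ i ∈ s, c i * (m i / l i)| ^ 2 := (sq_abs _).symm
    _ ≤ (C * ∑ i ∈ s, |c i| * |l i|⁻¹) ^ 2 := pow_le_pow_left₀ (abs_nonneg _) habs 2
    _ = C ^ 2 * (∑ i ∈ s, |c i| * |l i|⁻¹) ^ 2 := mul_pow _ _ _
    _ ≤ C ^ 2 * (∑ i ∈ s, c i ^ 2) * ∑ i ∈ s, (l i)⁻¹ ^ 2 := by
        rw [mul_assoc]; simp only [inv_pow]; gcongr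

theorem integral_sq_sum_perturbed_le {ι : Type*} [DecidableEq ι] (s : Finset ι) {a b K C : ℝ}
    (hab : a ≤ b) {φ M f : ι → ℝ → ℝ} {l : ι → ℝ}
    (hφ : ∀ i ∈ s, Continuous (φ i))
    (horth : ∀ i ∈ s, ∀ j ∈ s, ∫ t in a..b, φ i t * φ j t = if i = j then K else 0)
    (hM : ∀ i ∈ s, ContinuousOn (M i) (Set.Icc a b))
    (hMC : ∀ i ∈ s, ∀ t ∈ Set.Icc a b, |M i t| ≤ C)
    (hf : ∀ i ∈ s, ∀ t ∈ Set.Icc a b, f i t = φ i t + M i t / l i) (c : ι → ℝ) :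
    ∫ t in a..b, (∑ i ∈ s, c i * f i t) ^ 2
      ≤ (2 * K + 2 * (b - a) * C ^ 2 * ∑ i ∈ s, (l i)⁻¹ ^ 2) * ∑ i ∈ s, c i ^ 2 := by
  set g := fun t => ∑ i ∈ s, c i * φ i t
  set h := fun t => ∑ i ∈ s, c i * (M i t / l i)
  have hgc : Continuous g := continuous_finsetSum s fun i hi => continuous_const.mul (hφ i hi)
  have hhc : ContinuousOn h (Set.Icc a b) :=
    continuousOn_finsetSum s fun i hi => continuousOn_const.mul ((hM i hi).div_const _)
  have hg : IntervalIntegrable (fun t => g t ^ 2) volume a b :=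
    (hgc.pow 2).intervalIntegrable _ _
  have hh : IntervalIntegrable (fun t => h t ^ 2) volume a b :=
    (hhc.pow 2).intervalIntegrable_of_Icc hab
  have hsplit : Set.EqOn (fun t => (∑ i ∈ s, c i * f i t) ^ 2) (fun t => (g t + h t) ^ 2)
      (Set.uIcc a b) := fun t ht => by
    rw [Set.uIcc_of_le hab] at ht
    simp only [g, h, ← sum_add_distrib]
    exact congrArg (· ^ 2) (sum_congr rfl fun i hi => by rw [hf i hi t ht, mul_add])
  have hsplit_int : IntervalIntegrable (fun t => (g t + h t) ^ 2) volume a b :=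
    ((hgc.continuousOn.add hhc).pow 2).intervalIntegrable_of_Icc hab
  have hh_le : ∫ t in a..b, h t ^ 2
      ≤ (b - a) * (C ^ 2 * (∑ i ∈ s, c i ^ 2) * ∑ i ∈ s, (l i)⁻¹ ^ 2) := by
    refine (intervalIntegral.integral_mono_on hab hh intervalIntegrable_const
      fun t ht => sq_sum_mul_div_le s fun i hi => hMC i hi t ht).trans_eq ?_
    rw [intervalIntegral.integral_const, smul_eq_mul]
  calc ∫ t in a..b, (∑ i ∈ s, c i * f i t) ^ 2
      = ∫ t in a..b, (g t + h t) ^ 2 := intervalIntegral.integral_congr hsplit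
    _ ≤ ∫ t in a..b, 2 * g t ^ 2 + 2 * h t ^ 2 :=
        intervalIntegral.integral_mono_on hab hsplit_int ((hg.const_mul 2).add (hh.const_mul 2))
          fun t _ => by nlinarith [sq_nonneg (g t - h t)]
    _ = 2 * (K * ∑ i ∈ s, c i ^ 2) + 2 * ∫ t in a..b, h t ^ 2 := by
        rw [intervalIntegral.integral_add (hg.const_mul 2) (hh.const_mul 2),
          intervalIntegral.integral_const_mul, intervalIntegral.integral_const_mul,
          integral_sq_sum_of_orthogonal s (fun i hi j hj =>
            ((hφ i hi).mul (hφ j hj)).intervalIntegrable _ _) horth]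
    _ ≤ _ := by nlinarith [hh_le]

theorem integral_cos_const_mul {c L : ℝ} (hc : c ≠ 0) :
    ∫ t in (0:ℝ)..L, cos (c * t) = sin (c * L) / c := by
  rw [intervalIntegral.integral_comp_mul_left _ hc, integral_cos, mul_zero, sin_zero, sub_zero,
    smul_eq_mul, inv_mul_eq_div]

theorem integral_cos_mul_cos (a b L : ℝ) :
    ∫ t in (0:ℝ)..L, cos (a * t) * cos (b * t)
      = ((∫ t in (0:ℝ)..L, cos ((a - b) * t)) + ∫ t in (0:ℝ)..L, cos ((a + b) * t)) / 2 := by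
  have hprod : ∀ t, cos (a * t) * cos (b * t) = (cos ((a - b) * t) + cos ((a + b) * t)) / 2 :=
    fun t => by rw [sub_mul, add_mul, cos_sub, cos_add]; ring
  simp_rw [hprod]
  rw [intervalIntegral.integral_div, intervalIntegral.integral_add
    (Continuous.intervalIntegrable (by fun_prop) _ _)
    (Continuous.intervalIntegrable (by fun_prop) _ _)]

noncomputable def halfIntFreq (L : ℝ) (n : ℕ) : ℝ := ((n : ℝ) + 1 / 2) * π / L

theorem integral_cos_halfIntFreq_mul_cos {L : ℝ} (hL : L ≠ 0) (m n : ℕ) :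
    ∫ t in (0:ℝ)..L, cos (halfIntFreq L m * t) * cos (halfIntFreq L n * t)
      = if m = n then L / 2 else 0 := by
  have hsum : halfIntFreq L m + halfIntFreq L n = ((m + n + 1 : ℕ) : ℝ) * π / L := by
    unfold halfIntFreq; push_cast; ring
  have hdiff : halfIntFreq L m - halfIntFreq L n = ((m - n : ℤ) : ℝ) * π / L := by
    unfold halfIntFreq; push_cast; ring
  have hsum_int : ∫ t in (0:ℝ)..L, cos ((halfIntFreq L m + halfIntFreq L n) * t) = 0 := by
    rw [integral_cos_const_mul (by rw [hsum]; positivity), hsum, div_mul_cancel₀ _ hL,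
      sin_nat_mul_pi, zero_div]
  rw [integral_cos_mul_cos, hsum_int]
  split_ifs with hmn
  · simp [hmn]
  · have hne : halfIntFreq L m - halfIntFreq L n ≠ 0 := by
      rw [hdiff]
      exact div_ne_zero (mul_ne_zero (Int.cast_ne_zero.2 (sub_ne_zero.2 (by exact_mod_cast hmn)))
        pi_ne_zero) hL
    rw [integral_cos_const_mul hne, hdiff, div_mul_cancel₀ _ hL, sin_int_mul_pi]
    simp

theorem summable_halfIntFreq_inv_sq (L : ℝ) : Summable fun n => (halfIntFreq L n)⁻¹ ^ 2 := by
  have h := (Real.summable_one_div_nat_add_rpow (1 / 2) 2).2 one_lt_two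
  refine (h.mul_left ((L / π) ^ 2)).congr fun n => ?_
  have : (0:ℝ) < n + 1 / 2 := by positivity
  rw [abs_of_pos this, rpow_two, halfIntFreq]
  field_simp

theorem sum_Icc_one_sub_sum_Icc_one {M : Type*} [AddCommGroup M] (f : ℕ → M) {m n : ℕ}
    (hmn : m ≤ n) : ∑ i ∈ Icc 1 n, f i - ∑ i ∈ Icc 1 m, f i = ∑ i ∈ Ioc m n, f i := by
  have hIcc : ∀ k, Icc 1 k = Ioc 0 k := Icc_add_one_left_eq_Ioc 0
  rw [hIcc, hIcc, ← sum_Ioc_consecutive f (Nat.zero_le m) hmn, add_sub_cancel_left]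

theorem neg_one_pow_mul_sq (n : ℕ) (x : ℝ) : ((-1) ^ n * x) ^ 2 = x ^ 2 := by
  rw [mul_pow, ← pow_mul, pow_mul', neg_one_sq, one_pow, one_mul]

theorem stmt_11_general (L C : ℝ) (hL : 0 < L)
    (lam : ℕ → ℝ) (hlam : ∀ n : ℕ, lam n = ((n : ℝ) + 1 / 2) * Real.pi / L)
    (ξ : ℕ → ℝ) (hξ : Summable fun n : ℕ => ξ n ^ 2)
    (z M : ℕ → ℝ → ℝ)
    (hMc : ∀ n ≥ 1, ContinuousOn (M n) (Set.Icc 0 L))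
    (hMb : ∀ n ≥ 1, ∀ t ∈ Set.Icc (0:ℝ) L, |M n t| ≤ C)
    (hzform : ∀ n ≥ 1, ∀ t ∈ Set.Icc (0:ℝ) L,
      z n t = Real.cos (lam n * t) + M n t / lam n) :
    ∀ ε > 0, ∃ N₀ : ℕ, ∀ N₁ ≥ N₀, ∀ N₂ ≥ N₀,
      (∫ t in (0:ℝ)..L,
        ((∑ n ∈ Finset.Icc 1 N₁, (-1 : ℝ) ^ n * ξ n * z n t)
          - ∑ n ∈ Finset.Icc 1 N₂, (-1 : ℝ) ^ n * ξ n * z n t) ^ 2) < ε := by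
  obtain rfl : lam = halfIntFreq L := funext fun n => hlam n
  intro ε hε
  set K := L * (1 + 2 * C ^ 2 * ∑' n, (halfIntFreq L n)⁻¹ ^ 2) with hK_def
  have hK : 0 < K := by positivity
  obtain ⟨s, hs⟩ := summable_iff_vanishing.1 hξ _ (Iio_mem_nhds (div_pos hε hK))
  obtain ⟨N₀, hN₀⟩ := s.exists_nat_subset_range
  refine ⟨N₀, fun N₁ h₁ N₂ h₂ => ?_⟩
  wlog hN : N₂ ≤ N₁ generalizing N₁ N₂
  · simpa only [sub_sq_comm] using this N₂ h₂ N₁ h₁ (le_of_not_ge hN)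
  have hpos : ∀ n ∈ Ioc N₂ N₁, n ≥ 1 := fun n hn => by have := (mem_Ioc.1 hn).1; omega
  have hdisj : Disjoint (Ioc N₂ N₁) s := disjoint_left.2 fun n hn hns => by
    have := mem_range.1 (hN₀ hns); have := (mem_Ioc.1 hn).1; omega
  simp_rw [sum_Icc_one_sub_sum_Icc_one _ hN]
  calc _ ≤ (2 * (L / 2) + 2 * (L - 0) * C ^ 2 * ∑ n ∈ Ioc N₂ N₁, (halfIntFreq L n)⁻¹ ^ 2)
          * ∑ n ∈ Ioc N₂ N₁, ((-1) ^ n * ξ n) ^ 2 :=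
        integral_sq_sum_perturbed_le _ hL.le (fun n _ => by fun_prop)
          (fun m _ n _ => integral_cos_halfIntFreq_mul_cos hL.ne' m n)
          (fun n hn => hMc n (hpos n hn)) (fun n hn => hMb n (hpos n hn))
          (fun n hn => hzform n (hpos n hn)) _
    _ ≤ K * ∑ n ∈ Ioc N₂ N₁, ξ n ^ 2 := by
        simp only [neg_one_pow_mul_sq]
        gcongr
        rw [sub_zero, show ∀ x, 2 * (L / 2) + 2 * L * C ^ 2 * x = L * (1 + 2 * C ^ 2 * x) from
          fun x => by ring, hK_def]
        gcongr
        exact (summable_halfIntFreq_inv_sq L).sum_le_tsum _ fun n _ => sq_nonneg _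
    _ < K * (ε / K) := by gcongr; exact hs _ hdisj
    _ = ε := mul_div_cancel₀ _ hK.ne'

theorem stmt_11 (L C : ℝ) (hL : 0 < L) (hC : 0 < C)
    (lam : ℕ → ℝ) (hlam : ∀ n : ℕ, lam n = ((n : ℝ) + 1 / 2) * Real.pi / L)
    (ξ : ℕ → ℝ) (hξ : Summable fun n : ℕ => ξ n ^ 2)
    (z M : ℕ → ℝ → ℝ)
    (hzc : ∀ n ≥ 1, ContinuousOn (z n) (Set.Icc 0 L))
    (hMc : ∀ n ≥ 1, ContinuousOn (M n) (Set.Icc 0 L))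
    (hMb : ∀ n ≥ 1, ∀ t ∈ Set.Icc (0:ℝ) L, |M n t| ≤ C)
    (hzform : ∀ n ≥ 1, ∀ t ∈ Set.Icc (0:ℝ) L,
      z n t = Real.cos (lam n * t) + M n t / lam n) :
    ∀ ε > 0, ∃ N₀ : ℕ, ∀ N₁ ≥ N₀, ∀ N₂ ≥ N₀,
      (∫ t in (0:ℝ)..L,
        ((∑ n ∈ Finset.Icc 1 N₁, (-1 : ℝ) ^ n * ξ n * z n t)
          - ∑ n ∈ Finset.Icc 1 N₂, (-1 : ℝ) ^ n * ξ n * z n t) ^ 2) < ε :=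
  stmt_11_general L C hL lam hlam ξ hξ z M hMc hMb hzform
end

section
/- Let L > 0, γ₀ = √(2/L), λₙ = (n + 1/2)π/L, and C > 0. Let g and β be continuous on [0,L], and let zₙ : [0,L] → ℝ be continuous functions of the form zₙ(t) = cos(λₙ t) + Mₙ(t)/λₙ with Mₙ continuous and |Mₙ(t)| ≤ C for all n and t ∈ [0,L]. For each n define θₙ(t) = (γ₀/λₙ)·∫₀ᵗ g(s) ds − (γ₀/λₙ)·∫₀ᵗ g(t−s)·(zₙ(s) + ∫₀ˢ β(s−r)zₙ(r) dr) ds, and let H be the L²(0,L) limit of the partial sums ∑_{n=1}^N (−1)ⁿ (γ₀/λₙ) zₙ. Then the partial sums ∑_{n=1}^N (−1)ⁿ γ₀ θₙ converge in L²(0,L) to the function t ↦ (γ₀² ∑_{n=1}^∞ (−1)ⁿ/λₙ)·∫₀ᵗ g(s) ds − γ₀ ∫₀ᵗ g(t−s)H(s) ds − γ₀ ∫₀ᵗ β(s)·(∫₀^{t−s} g(t−s−r)H(r) dr) ds, where the numerical series ∑_{n=1}^∞ (−1)ⁿ/λₙ converges (conditionally) with sum (L/π)(π/2 − 2). -/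
/-!
With the Volterra convolution `(f ⋆ u)(t) = ∫₀ᵗ f(t - s) u(s) ds` (`volterraConv f u t`), which is
commutative, and associative on continuous functions (Fubini on the triangle `0 ≤ r ≤ s ≤ t`),
linearity gives `∑ₙ (-1)ⁿ γ₀ θₙ = γ₀² A_N ∫₀ᵗ g - γ₀ (g ⋆ P_N + β ⋆ g ⋆ P_N)` with
`A_N = ∑ₙ (-1)ⁿ / λₙ` and `P_N = ∑ₙ (-1)ⁿ (γ₀ / λₙ) zₙ`. The limit has the same shape with `A` and
`H` in place of `A_N` and `P_N`, so the difference is bounded, uniformly in `t ∈ [0, L]`, by a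
multiple of `|A_N - A| + ‖P_N - H‖_{L¹}`, and `‖P_N - H‖_{L¹} ≤ √L ‖P_N - H‖_{L²} → 0`.
The numerical series is Leibniz's series for `π / 4`, rescaled by `2L / π` and without its first
term.
-/

open Real Filter MeasureTheory Set Topology Function
open scoped ENNReal

lemma integral_integral_triangle_swap {F : ℝ → ℝ → ℝ} (hF : Continuous (uncurry F)) {t : ℝ}
    (ht : 0 ≤ t) :
    ∫ s in (0:ℝ)..t, ∫ r in (0:ℝ)..s, F s r = ∫ r in (0:ℝ)..t, ∫ s in r..t, F s r := by
  set μ := volume.restrict (Ioc (0:ℝ) t)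
  set Φ : ℝ × ℝ → ℝ := {p | p.2 ≤ p.1}.indicator (uncurry F)
  have hΦ : Integrable Φ (μ.prod μ) := by
    rw [Measure.prod_restrict, ← Measure.volume_eq_prod]
    refine IntegrableOn.indicator ?_ (measurableSet_le measurable_snd measurable_fst)
    exact (hF.continuousOn.integrableOn_compact (isCompact_Icc.prod isCompact_Icc)).mono_set
      (prod_mono Ioc_subset_Icc_self Ioc_subset_Icc_self)
  have hleft : ∀ s ∈ Ioc (0:ℝ) t, ∫ r, Φ (s, r) ∂μ = ∫ r in (0:ℝ)..s, F s r := fun s hs => by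
    change ∫ r, (Iic s).indicator (F s) r ∂μ = _
    rw [integral_indicator measurableSet_Iic, Measure.restrict_restrict measurableSet_Iic,
      Iic_inter_Ioc_of_le hs.2, intervalIntegral.integral_of_le hs.1.le]
  have hright : ∀ r ∈ Ioc (0:ℝ) t, ∫ s, Φ (s, r) ∂μ = ∫ s in r..t, F s r := fun r hr => by
    change ∫ s, (Ici r).indicator (fun s => F s r) s ∂μ = _
    have hIcc : Ici r ∩ Ioc 0 t = Icc r t := by
      ext s
      simp only [mem_inter_iff, mem_Ici, mem_Ioc, mem_Icc]
      exact ⟨fun h => ⟨h.1, h.2.2⟩, fun h => ⟨h.1, hr.1.trans_le h.1, h.2⟩⟩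
    rw [integral_indicator measurableSet_Ici, Measure.restrict_restrict measurableSet_Ici, hIcc,
      intervalIntegral.integral_of_le hr.2, integral_Icc_eq_integral_Ioc]
  rw [intervalIntegral.integral_of_le ht, intervalIntegral.integral_of_le ht,
    ← setIntegral_congr_fun measurableSet_Ioc hleft,
    ← setIntegral_congr_fun measurableSet_Ioc hright]
  exact integral_integral_swap hΦ

lemma integral_abs_le_sqrt_mul_sqrt_integral_sq {α : Type*} [MeasurableSpace α] {μ : Measure α}
    [IsFiniteMeasure μ] {u : α → ℝ} (hu : MemLp u 2 μ) :
    ∫ x, |u x| ∂μ ≤ √(μ.real univ) * √(∫ x, u x ^ 2 ∂μ) := by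
  have h := integral_mul_le_Lp_mul_Lq_of_nonneg (μ := μ) Real.HolderConjugate.two_two
    (f := fun _ => (1 : ℝ)) (g := fun x => |u x|) (Eventually.of_forall fun _ => zero_le_one)
    (Eventually.of_forall fun x => abs_nonneg (u x)) (by simpa using memLp_const (1 : ℝ))
    (by simpa using hu.norm)
  simpa [sqrt_eq_rpow, Real.rpow_two] using h

lemma tendsto_integral_abs_of_tendsto_integral_sq {ι α : Type*} {l : Filter ι}
    [MeasurableSpace α] {μ : Measure α} [IsFiniteMeasure μ] {u : ι → α → ℝ}
    (hu : ∀ i, MemLp (u i) 2 μ) (h : Tendsto (fun i => ∫ x, u i x ^ 2 ∂μ) l (𝓝 0)) :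
    Tendsto (fun i => ∫ x, |u i x| ∂μ) l (𝓝 0) := by
  have hsqrt := ((continuous_sqrt.tendsto 0).comp h).const_mul √(μ.real univ)
  rw [sqrt_zero, mul_zero] at hsqrt
  exact squeeze_zero (fun i => integral_nonneg fun _ => abs_nonneg _)
    (fun i => integral_abs_le_sqrt_mul_sqrt_integral_sq (hu i)) hsqrt

lemma Continuous.memLp_restrict_Ioc {f : ℝ → ℝ} (hf : Continuous f) (p : ℝ≥0∞) (a b : ℝ) :
    MemLp f p (volume.restrict (Ioc a b)) := by
  obtain ⟨C, hC⟩ := isCompact_Icc.exists_bound_of_continuousOn (hf.continuousOn (s := Icc a b))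
  exact MemLp.of_bound hf.aestronglyMeasurable C
    ((ae_restrict_mem measurableSet_Ioc).mono fun x hx => hC x (Ioc_subset_Icc_self hx))

lemma tendsto_intervalIntegral_sq_of_abs_le {ι : Type*} {l : Filter ι} {L : ℝ} (hL : 0 ≤ L)
    {F : ι → ℝ → ℝ} {D : ι → ℝ} (hF : ∀ i, ∀ t ∈ Ioc 0 L, |F i t| ≤ D i)
    (hD : Tendsto D l (𝓝 0)) :
    Tendsto (fun i => ∫ t in (0:ℝ)..L, F i t ^ 2) l (𝓝 0) := by
  have hD2 : Tendsto (fun i => D i ^ 2 * |L - 0|) l (𝓝 0) := by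
    simpa using (hD.pow 2).mul_const |L - 0|
  refine squeeze_zero_norm (fun i => intervalIntegral.norm_integral_le_of_norm_le_const
    fun t ht => ?_) hD2
  rw [uIoc_of_le hL] at ht
  rw [norm_pow, Real.norm_eq_abs]
  exact pow_le_pow_left₀ (abs_nonneg _) (hF i t ht) 2

lemma abs_intervalIntegral_le_mul {g : ℝ → ℝ} {C L t : ℝ} (hg : ∀ x ∈ Icc 0 L, |g x| ≤ C)
    (ht : t ∈ Icc 0 L) : |∫ s in (0:ℝ)..t, g s| ≤ C * L := by
  have h := intervalIntegral.norm_integral_le_of_norm_le_const (a := 0) (b := t) (C := C)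
    (f := g) fun x hx => by
      rw [uIoc_of_le ht.1] at hx
      exact hg x ⟨hx.1.le, hx.2.trans ht.2⟩
  rw [sub_zero, abs_of_nonneg ht.1] at h
  exact h.trans (mul_le_mul_of_nonneg_left ht.2 ((abs_nonneg _).trans (hg t ht)))

lemma sum_Icc_one_eq_sum_range_sub (a : ℕ → ℝ) (N : ℕ) :
    ∑ n ∈ Finset.Icc 1 N, a n = ∑ n ∈ Finset.range (N + 1), a n - a 0 := by
  rw [Finset.range_eq_Ico, Finset.sum_eq_sum_Ico_succ_bot N.succ_pos, zero_add,
    Nat.succ_eq_add_one, Finset.Ico_add_one_right_eq_Icc, add_sub_cancel_left]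

lemma tendsto_sum_neg_one_pow_div (L : ℝ) :
    Tendsto (fun N : ℕ => ∑ n ∈ Finset.Icc 1 N, (-1 : ℝ) ^ n / (((n : ℝ) + 1 / 2) * π / L))
      atTop (𝓝 (L / π * (π / 2 - 2))) := by
  have hterm : ∀ n : ℕ, (-1 : ℝ) ^ n / (((n : ℝ) + 1 / 2) * π / L)
      = 2 * L / π * ((-1 : ℝ) ^ n / (2 * n + 1)) := fun n => by
    rw [div_div_eq_mul_div]
    field_simp
  have hlim := ((tendsto_sum_pi_div_four.comp (tendsto_add_atTop_nat 1)).sub_const 1).const_mul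
    (2 * L / π)
  convert hlim using 2 with N
  · simp only [hterm, sum_Icc_one_eq_sum_range_sub, Function.comp_apply, ← Finset.mul_sum]
    norm_num
  · field_simp
    ring

noncomputable def volterraConv (f u : ℝ → ℝ) (t : ℝ) : ℝ := ∫ s in (0:ℝ)..t, f (t - s) * u s

section volterraConv

variable {f g u v : ℝ → ℝ} {t L : ℝ}

lemma volterraConv_congr {f' u' : ℝ → ℝ} (ht : 0 ≤ t) (hf : EqOn f f' (Icc 0 t))
    (hu : EqOn u u' (Icc 0 t)) : volterraConv f u t = volterraConv f' u' t :=
  intervalIntegral.integral_congr fun s hs => by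
    rw [uIcc_of_le ht] at hs
    simp only [hf ⟨sub_nonneg.2 hs.2, by linarith [hs.1]⟩, hu hs]

lemma volterraConv_comm (f u : ℝ → ℝ) (t : ℝ) : volterraConv f u t = volterraConv u f t := by
  simpa [volterraConv, mul_comm] using
    (intervalIntegral.integral_comp_sub_left (fun s => u s * f (t - s)) t (a := 0) (b := t)).symm

lemma volterraConv_assoc (hf : Continuous f) (hg : Continuous g) (hu : Continuous u)
    (ht : 0 ≤ t) : volterraConv f (volterraConv g u) t = volterraConv (volterraConv f g) u t := by
  have hF : Continuous (uncurry fun s r => f (t - s) * (g (s - r) * u r)) := by fun_prop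
  calc volterraConv f (volterraConv g u) t
      = ∫ s in (0:ℝ)..t, ∫ r in (0:ℝ)..s, f (t - s) * (g (s - r) * u r) := by
        simp only [volterraConv, intervalIntegral.integral_const_mul]
    _ = ∫ r in (0:ℝ)..t, ∫ s in r..t, f (t - s) * (g (s - r) * u r) :=
        integral_integral_triangle_swap hF ht
    _ = volterraConv (volterraConv f g) u t := by
        simp only [volterraConv, ← intervalIntegral.integral_mul_const]
        refine intervalIntegral.integral_congr fun r _ => ?_
        simpa [mul_assoc, sub_sub, add_comm] using (intervalIntegral.integral_comp_add_right
          (fun s => f (t - s) * (g (s - r) * u r)) r (a := 0) (b := t - r)).symm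

lemma volterraConv_left_comm (hf : Continuous f) (hg : Continuous g) (hu : Continuous u)
    (ht : 0 ≤ t) : volterraConv f (volterraConv g u) t = volterraConv g (volterraConv f u) t := by
  rw [volterraConv_assoc hf hg hu ht, volterraConv_assoc hg hf hu ht,
    funext (volterraConv_comm f g)]

lemma continuous_volterraConv (hf : Continuous f) (hu : Continuous u) :
    Continuous (volterraConv f u) :=
  intervalIntegral.continuous_parametric_intervalIntegral_of_continuous (by fun_prop)
    continuous_id

lemma intervalIntegrable_volterraConv_integrand (hf : Continuous f)
    (hu : IntegrableOn u (Ioc 0 L)) (ht : t ∈ Icc 0 L) :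
    IntervalIntegrable (fun s => f (t - s) * u s) volume 0 t := by
  rw [intervalIntegrable_iff_integrableOn_Icc_of_le ht.1]
  refine IntegrableOn.continuousOn_mul (by fun_prop) ?_ isCompact_Icc
  exact (integrableOn_Icc_iff_integrableOn_Ioc).2 (hu.mono_set (Ioc_subset_Ioc_right ht.2))

lemma volterraConv_add (hf : Continuous f) (hu : IntegrableOn u (Ioc 0 L))
    (hv : IntegrableOn v (Ioc 0 L)) (ht : t ∈ Icc 0 L) :
    volterraConv f (u + v) t = volterraConv f u t + volterraConv f v t := by
  simp only [volterraConv, Pi.add_apply, mul_add]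
  exact intervalIntegral.integral_add (intervalIntegrable_volterraConv_integrand hf hu ht)
    (intervalIntegrable_volterraConv_integrand hf hv ht)

lemma volterraConv_sub (hf : Continuous f) (hu : IntegrableOn u (Ioc 0 L))
    (hv : IntegrableOn v (Ioc 0 L)) (ht : t ∈ Icc 0 L) :
    volterraConv f (u - v) t = volterraConv f u t - volterraConv f v t := by
  simp only [volterraConv, Pi.sub_apply, mul_sub]
  exact intervalIntegral.integral_sub (intervalIntegrable_volterraConv_integrand hf hu ht)
    (intervalIntegrable_volterraConv_integrand hf hv ht)

lemma volterraConv_finset_sum {ι : Type*} (s : Finset ι) (c : ι → ℝ) {u : ι → ℝ → ℝ}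
    (hf : Continuous f) (hu : ∀ i ∈ s, Continuous (u i)) (t : ℝ) :
    volterraConv f (fun x => ∑ i ∈ s, c i * u i x) t = ∑ i ∈ s, c i * volterraConv f (u i) t := by
  simp only [volterraConv, Finset.mul_sum, ← intervalIntegral.integral_const_mul (𝕜 := ℝ),
    mul_left_comm (c _)]
  refine intervalIntegral.integral_finsetSum fun i hi => ?_
  have := hu i hi
  exact Continuous.intervalIntegrable (by fun_prop) _ _

lemma continuousOn_volterraConv (hf : Continuous f) (hu : IntegrableOn u (Ioc 0 L)) :
    ContinuousOn (volterraConv f u) (Icc 0 L) := by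
  intro x₀ hx₀
  have hL : 0 ≤ L := hx₀.1.trans hx₀.2
  obtain ⟨C, hC⟩ := isCompact_Icc.exists_bound_of_continuousOn (hf.continuousOn (s := Icc 0 L))
  set F : ℝ → ℝ → ℝ := fun x r => (Iic x).indicator (fun r => f (x - r) * u r) r
  have hF : EqOn (fun x => ∫ r in (0:ℝ)..L, F x r) (volterraConv f u) (Icc 0 L) := fun x hx => by
    simp only [F, volterraConv, intervalIntegral.integral_of_le hL,
      intervalIntegral.integral_of_le hx.1, integral_indicator measurableSet_Iic,
      Measure.restrict_restrict measurableSet_Iic, Iic_inter_Ioc_of_le hx.2]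
  refine ContinuousWithinAt.congr ?_ hF.symm (hF hx₀).symm
  rw [← uIoc_of_le hL] at hu
  refine intervalIntegral.continuousWithinAt_of_dominated_interval
    (bound := fun r => C * |u r|) ?_ ?_ ?_ ?_
  · exact Eventually.of_forall fun x =>
      ((hf.comp (continuous_sub_left x)).aestronglyMeasurable.mul
        hu.aestronglyMeasurable).indicator measurableSet_Iic
  · filter_upwards [self_mem_nhdsWithin] with x hx
    refine Eventually.of_forall fun r hr => ?_
    rw [uIoc_of_le hL] at hr
    by_cases hrx : r ≤ x
    · simp only [F, indicator_of_mem (mem_Iic.2 hrx), norm_mul, Real.norm_eq_abs]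
      exact mul_le_mul_of_nonneg_right (hC _ ⟨sub_nonneg.2 hrx, by linarith [hr.1, hx.2]⟩)
        (abs_nonneg _)
    · simp only [F, indicator_of_notMem (notMem_Iic.2 (not_le.1 hrx)), norm_zero]
      exact mul_nonneg ((norm_nonneg _).trans (hC 0 ⟨le_rfl, hL⟩)) (abs_nonneg _)
  · exact (intervalIntegrable_iff.2 hu).abs.const_mul C
  · filter_upwards [compl_mem_ae_iff.2 (measure_singleton x₀)] with r hr _
    refine ContinuousAt.continuousWithinAt ?_
    change ContinuousAt ((Ici r).indicator fun x => f (x - r) * u r) x₀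
    refine ContinuousOn.continuousAt_indicator (by fun_prop) ?_
    rw [frontier_Ici]
    exact fun h => hr h.symm

lemma abs_volterraConv_le {C : ℝ} (hf : ∀ x ∈ Icc 0 L, |f x| ≤ C) (hu : IntegrableOn u (Ioc 0 L))
    (ht : t ∈ Icc 0 L) : |volterraConv f u t| ≤ C * ∫ x in Ioc 0 L, |u x| := by
  have hC : 0 ≤ C := (abs_nonneg _).trans (hf t ht)
  calc |volterraConv f u t| ≤ ∫ s in Ioc 0 t, C * |u s| := by
        rw [volterraConv, intervalIntegral.integral_of_le ht.1, ← Real.norm_eq_abs]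
        refine norm_integral_le_of_norm_le
          ((hu.mono_set (Ioc_subset_Ioc_right ht.2)).abs.const_mul C) ?_
        filter_upwards [ae_restrict_mem measurableSet_Ioc] with s hs
        rw [norm_mul, Real.norm_eq_abs, Real.norm_eq_abs]
        exact mul_le_mul_of_nonneg_right (hf _ ⟨by linarith [hs.2], by linarith [hs.1, ht.2]⟩)
          (abs_nonneg _)
    _ = C * ∫ s in Ioc 0 t, |u s| := integral_const_mul C _
    _ ≤ C * ∫ x in Ioc 0 L, |u x| := mul_le_mul_of_nonneg_left (setIntegral_mono_set hu.norm
        (Eventually.of_forall fun _ => abs_nonneg _) (Ioc_subset_Ioc_right ht.2).eventuallyLE) hC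

lemma volterraConv_add_volterraConv_sub {β : ℝ → ℝ} (hg : Continuous g) (hβ : Continuous β)
    (hu : IntegrableOn u (Ioc 0 L)) (hv : IntegrableOn v (Ioc 0 L)) (ht : t ∈ Icc 0 L) :
    (volterraConv g u t + volterraConv β (volterraConv g u) t)
      - (volterraConv g v t + volterraConv β (volterraConv g v) t)
      = volterraConv g (u - v) t + volterraConv β (volterraConv g (u - v)) t := by
  have hint : ∀ w, IntegrableOn w (Ioc 0 L) → IntegrableOn (volterraConv g w) (Ioc 0 L) :=
    fun w hw => (continuousOn_volterraConv hg hw).integrableOn_Icc.mono_set Ioc_subset_Icc_self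
  have hinner : volterraConv β (volterraConv g (u - v)) t
      = volterraConv β (volterraConv g u - volterraConv g v) t :=
    volterraConv_congr ht.1 (eqOn_refl _ _)
      fun s hs => volterraConv_sub hg hu hv ⟨hs.1, hs.2.trans ht.2⟩
  rw [volterraConv_sub hg hu hv ht, hinner, volterraConv_sub hβ (hint u hu) (hint v hv) ht]
  ring

lemma abs_volterraConv_add_volterraConv_le {β : ℝ → ℝ} {C : ℝ} (hg : ∀ x ∈ Icc 0 L, |g x| ≤ C)
    (hβ : IntegrableOn β (Ioc 0 L)) (hu : IntegrableOn u (Ioc 0 L)) (ht : t ∈ Icc 0 L) :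
    |volterraConv g u t + volterraConv β (volterraConv g u) t|
      ≤ C * (1 + ∫ x in Ioc 0 L, |β x|) * ∫ x in Ioc 0 L, |u x| := by
  have hβgu : |volterraConv β (volterraConv g u) t|
      ≤ (C * ∫ x in Ioc 0 L, |u x|) * ∫ x in Ioc 0 L, |β x| := by
    rw [volterraConv_comm]
    exact abs_volterraConv_le (fun x hx => abs_volterraConv_le hg hu hx) hβ ht
  calc _ ≤ |volterraConv g u t| + |volterraConv β (volterraConv g u) t| := abs_add_le _ _
    _ ≤ C * (∫ x in Ioc 0 L, |u x|) + (C * ∫ x in Ioc 0 L, |u x|) * ∫ x in Ioc 0 L, |β x| :=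
        add_le_add (abs_volterraConv_le hg hu ht) hβgu
    _ = _ := by ring

lemma volterraConv_add_volterraConv_finset_sum {ι : Type*} (s : Finset ι) (c : ι → ℝ)
    {β : ℝ → ℝ} {z : ι → ℝ → ℝ} (hg : Continuous g) (hβ : Continuous β)
    (hz : ∀ i ∈ s, Continuous (z i)) (ht : 0 ≤ t) :
    ∑ i ∈ s, c i * volterraConv g (z i + volterraConv β (z i)) t
      = volterraConv g (fun x => ∑ i ∈ s, c i * z i x) t
        + volterraConv β (volterraConv g fun x => ∑ i ∈ s, c i * z i x) t := by
  set P := fun x => ∑ i ∈ s, c i * z i x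
  have hP : Continuous P := continuous_finsetSum s fun i hi => (hz i hi).const_mul (c i)
  have hsum : (fun x => ∑ i ∈ s, c i * (z i + volterraConv β (z i)) x)
      = P + volterraConv β P := funext fun x => by
    simp only [mul_add, Finset.sum_add_distrib, volterraConv_finset_sum s c hβ hz, P, Pi.add_apply]
  rw [← volterraConv_finset_sum s c hg
      fun i hi => (hz i hi).add (continuous_volterraConv hβ (hz i hi)),
    hsum, volterraConv_add hg hP.integrableOn_Ioc (continuous_volterraConv hβ hP).integrableOn_Ioc
      ⟨ht, le_rfl⟩, volterraConv_left_comm hg hβ hP ht]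

lemma volterraConv_eq_integral_mul_sub (f u : ℝ → ℝ) (t : ℝ) :
    volterraConv f u t = ∫ s in (0:ℝ)..t, f s * u (t - s) := by
  rw [volterraConv_comm]
  simp only [volterraConv, mul_comm]

lemma volterraConv_add_volterraConv_congr {β g' β' u' : ℝ → ℝ} (ht : 0 ≤ t)
    (hg : EqOn g g' (Icc 0 t)) (hβ : EqOn β β' (Icc 0 t)) (hu : EqOn u u' (Icc 0 t)) :
    volterraConv g (u + volterraConv β u) t = volterraConv g' (u' + volterraConv β' u') t :=
  volterraConv_congr ht hg fun s hs => by
    have hs' : Icc 0 s ⊆ Icc 0 t := Icc_subset_Icc_right hs.2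
    simp only [Pi.add_apply, hu hs, volterraConv_congr hs.1 (hβ.mono hs') (hu.mono hs')]

end volterraConv

lemma sum_neg_one_pow_mul_eq_volterraConv {γ₀ G t : ℝ} {lam : ℕ → ℝ} {g β : ℝ → ℝ}
    (hg : Continuous g) (hβ : Continuous β) {z : ℕ → ℝ → ℝ} (hz : ∀ n ≥ 1, Continuous (z n))
    {θ : ℕ → ℝ → ℝ} (hθ : ∀ n ≥ 1, θ n t = (γ₀ / lam n) * G
      - (γ₀ / lam n) * volterraConv g (z n + volterraConv β (z n)) t) (ht : 0 ≤ t) (N : ℕ) :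
    ∑ n ∈ Finset.Icc 1 N, (-1 : ℝ) ^ n * γ₀ * θ n t
      = γ₀ ^ 2 * (∑ n ∈ Finset.Icc 1 N, (-1 : ℝ) ^ n / lam n) * G
        - γ₀ * (volterraConv g
              (fun x => ∑ n ∈ Finset.Icc 1 N, (-1 : ℝ) ^ n * (γ₀ / lam n) * z n x) t
            + volterraConv β (volterraConv g
              fun x => ∑ n ∈ Finset.Icc 1 N, (-1 : ℝ) ^ n * (γ₀ / lam n) * z n x) t) := by
  calc _ = ∑ n ∈ Finset.Icc 1 N, (γ₀ ^ 2 * ((-1 : ℝ) ^ n / lam n) * G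
        - γ₀ * ((-1 : ℝ) ^ n * (γ₀ / lam n) * volterraConv g (z n + volterraConv β (z n)) t)) :=
        Finset.sum_congr rfl fun n hn => by
          rw [hθ n (Finset.mem_Icc.1 hn).1]
          ring
    _ = _ := by
      rw [Finset.sum_sub_distrib, ← Finset.sum_mul, ← Finset.mul_sum, ← Finset.mul_sum,
        volterraConv_add_volterraConv_finset_sum _ _ hg hβ
          (fun n hn => hz n (Finset.mem_Icc.1 hn).1) ht]

lemma tendsto_integral_sq_deconvolution_of_continuous {L γ₀ A : ℝ} (hL : 0 ≤ L)
    {lam : ℕ → ℝ} {g β : ℝ → ℝ} (hg : Continuous g) (hβ : Continuous β) {z : ℕ → ℝ → ℝ}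
    (hz : ∀ n ≥ 1, Continuous (z n)) {θ : ℕ → ℝ → ℝ}
    (hθ : ∀ n ≥ 1, ∀ t ∈ Icc 0 L, θ n t = (γ₀ / lam n) * (∫ s in (0:ℝ)..t, g s)
        - (γ₀ / lam n) * volterraConv g (z n + volterraConv β (z n)) t)
    {H : ℝ → ℝ} (hH : MemLp H 2 (volume.restrict (Ioc 0 L)))
    (hHlim : Tendsto (fun N : ℕ => ∫ t in (0:ℝ)..L,
        ((∑ n ∈ Finset.Icc 1 N, (-1 : ℝ) ^ n * (γ₀ / lam n) * z n t) - H t) ^ 2) atTop (𝓝 0))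
    (hA : Tendsto (fun N : ℕ => ∑ n ∈ Finset.Icc 1 N, (-1 : ℝ) ^ n / lam n) atTop (𝓝 A)) :
    Tendsto (fun N : ℕ => ∫ t in (0:ℝ)..L,
        ((∑ n ∈ Finset.Icc 1 N, (-1 : ℝ) ^ n * γ₀ * θ n t)
          - (γ₀ ^ 2 * A * (∫ s in (0:ℝ)..t, g s) - γ₀ * volterraConv g H t
            - γ₀ * volterraConv β (volterraConv g H) t)) ^ 2) atTop (𝓝 0) := by
  set P : ℕ → ℝ → ℝ := fun N x => ∑ n ∈ Finset.Icc 1 N, (-1 : ℝ) ^ n * (γ₀ / lam n) * z n x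
  have hP : ∀ N, Continuous (P N) := fun N =>
    continuous_finsetSum _ fun n hn => (hz n (Finset.mem_Icc.1 hn).1).const_mul _
  have hHint : IntegrableOn H (Ioc 0 L) := hH.integrable one_le_two
  obtain ⟨C, hC⟩ := isCompact_Icc.exists_bound_of_continuousOn (hg.continuousOn (s := Icc 0 L))
  simp only [Real.norm_eq_abs] at hC
  have hI : Tendsto (fun N => ∫ x in Ioc 0 L, |(P N - H) x|) atTop (𝓝 0) :=
    tendsto_integral_abs_of_tendsto_integral_sq
      (fun N => ((hP N).memLp_restrict_Ioc 2 0 L).sub hH)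
      (by simpa only [intervalIntegral.integral_of_le hL, Pi.sub_apply, P] using hHlim)
  refine tendsto_intervalIntegral_sq_of_abs_le hL
    (D := fun N => γ₀ ^ 2 * |∑ n ∈ Finset.Icc 1 N, (-1 : ℝ) ^ n / lam n - A| * (C * L)
      + |γ₀| * (C * (1 + ∫ x in Ioc 0 L, |β x|) * ∫ x in Ioc 0 L, |(P N - H) x|))
    (fun N t ht => ?_) ?_
  · have ht' : t ∈ Icc 0 L := Ioc_subset_Icc_self ht
    calc _ = |γ₀ ^ 2 * (∑ n ∈ Finset.Icc 1 N, (-1 : ℝ) ^ n / lam n - A) * (∫ s in (0:ℝ)..t, g s)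
          - γ₀ * (volterraConv g (P N - H) t + volterraConv β (volterraConv g (P N - H)) t)| := by
          rw [sum_neg_one_pow_mul_eq_volterraConv hg hβ hz (fun n hn => hθ n hn t ht') ht'.1,
            ← volterraConv_add_volterraConv_sub hg hβ (hP N).integrableOn_Ioc hHint ht']
          congr 1
          ring
      _ ≤ _ := by
        refine (abs_sub _ _).trans (add_le_add ?_ ?_)
        · rw [abs_mul, abs_mul, abs_pow, sq_abs]
          gcongr
          exact abs_intervalIntegral_le_mul hC ht'
        · rw [abs_mul]
          gcongr
          exact abs_volterraConv_add_volterraConv_le hC hβ.integrableOn_Ioc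
            ((hP N).integrableOn_Ioc.sub hHint) ht'
  · simpa using ((((hA.sub_const A).abs).const_mul (γ₀ ^ 2)).mul_const (C * L)).add
      ((hI.const_mul (C * (1 + ∫ x in Ioc 0 L, |β x|))).const_mul |γ₀|)

theorem stmt_13_general (L : ℝ) (hL : 0 < L)
    (γ₀ : ℝ)
    (lam : ℕ → ℝ) (hlam : ∀ n : ℕ, lam n = ((n : ℝ) + 1 / 2) * Real.pi / L)
    (g β : ℝ → ℝ) (hg : ContinuousOn g (Set.Icc 0 L)) (hβ : ContinuousOn β (Set.Icc 0 L))
    (z : ℕ → ℝ → ℝ)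
    (hzc : ∀ n ≥ 1, ContinuousOn (z n) (Set.Icc 0 L))
    (θ : ℕ → ℝ → ℝ)
    (hθ : ∀ n ≥ 1, ∀ t : ℝ,
      θ n t = (γ₀ / lam n) * (∫ s in (0:ℝ)..t, g s)
        - (γ₀ / lam n) *
            ∫ s in (0:ℝ)..t, g (t - s) * (z n s + ∫ r in (0:ℝ)..s, β (s - r) * z n r))
    (H : ℝ → ℝ)
    (hHL2 : MeasureTheory.MemLp H 2 (MeasureTheory.volume.restrict (Set.Ioc 0 L)))
    (hHlim : Tendsto (fun N : ℕ => ∫ t in (0:ℝ)..L,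
        ((∑ n ∈ Finset.Icc 1 N, (-1 : ℝ) ^ n * (γ₀ / lam n) * z n t) - H t) ^ 2)
      atTop (nhds 0)) :
    Tendsto (fun N : ℕ => ∑ n ∈ Finset.Icc 1 N, (-1 : ℝ) ^ n / lam n)
        atTop (nhds ((L / Real.pi) * (Real.pi / 2 - 2)))
    ∧ Tendsto (fun N : ℕ => ∫ t in (0:ℝ)..L,
        ((∑ n ∈ Finset.Icc 1 N, (-1 : ℝ) ^ n * γ₀ * θ n t)
          - ((γ₀ ^ 2 * ((L / Real.pi) * (Real.pi / 2 - 2))) * (∫ s in (0:ℝ)..t, g s)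
            - γ₀ * (∫ s in (0:ℝ)..t, g (t - s) * H s)
            - γ₀ * ∫ s in (0:ℝ)..t,
                β s * ∫ r in (0:ℝ)..(t - s), g (t - s - r) * H r)) ^ 2)
      atTop (nhds 0) := by
  have hA : Tendsto (fun N : ℕ => ∑ n ∈ Finset.Icc 1 N, (-1 : ℝ) ^ n / lam n) atTop
      (𝓝 (L / π * (π / 2 - 2))) := by
    simpa only [hlam] using tendsto_sum_neg_one_pow_div L
  refine ⟨hA, ?_⟩
  -- Continuous extensions, constant outside `[0, L]`; only their values on `[0, L]` are seen.
  let ext : (ℝ → ℝ) → ℝ → ℝ := fun f => IccExtend hL.le ((Icc 0 L).domRestrict f)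
  have hext : ∀ f, ContinuousOn f (Icc 0 L) → Continuous (ext f) := fun f hf =>
    (continuousOn_iff_continuous_domRestrict.1 hf).Icc_extend'
  have hext_eq : ∀ f t, t ∈ Icc 0 L → EqOn f (ext f) (Icc 0 t) := fun f t ht x hx =>
    (IccExtend_of_mem hL.le ((Icc 0 L).domRestrict f) ⟨hx.1, hx.2.trans ht.2⟩).symm
  have hG : ∀ t ∈ Icc 0 L, ∫ s in (0:ℝ)..t, g s = ∫ s in (0:ℝ)..t, ext g s := fun t ht =>
    intervalIntegral.integral_congr fun s hs => hext_eq g t ht (uIcc_of_le ht.1 ▸ hs)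
  have hgH : ∀ t ∈ Icc 0 L, EqOn (volterraConv g H) (volterraConv (ext g) H) (Icc 0 t) :=
    fun t ht s hs => volterraConv_congr hs.1 (hext_eq g s ⟨hs.1, hs.2.trans ht.2⟩) (eqOn_refl _ _)
  have hHlim' : Tendsto (fun N : ℕ => ∫ t in (0:ℝ)..L,
      ((∑ n ∈ Finset.Icc 1 N, (-1 : ℝ) ^ n * (γ₀ / lam n) * ext (z n) t) - H t) ^ 2) atTop
      (𝓝 0) :=
    hHlim.congr fun N => intervalIntegral.integral_congr fun t ht => by
      simp only [← hext_eq _ L ⟨hL.le, le_rfl⟩ (uIcc_of_le hL.le ▸ ht)]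
  refine (tendsto_integral_sq_deconvolution_of_continuous hL.le (hext g hg) (hext β hβ)
    (fun n hn => hext _ (hzc n hn)) (θ := θ) (fun n hn t ht => ?_) hHL2 hHlim' hA).congr
      fun N => intervalIntegral.integral_congr fun t ht => ?_
  · rw [hθ n hn t, hG t ht, ← volterraConv_add_volterraConv_congr ht.1 (hext_eq g t ht)
      (hext_eq β t ht) (hext_eq (z n) t ht)]
    rfl
  · rw [uIcc_of_le hL.le] at ht
    rw [hG t ht, ← hgH t ht ⟨ht.1, le_rfl⟩, ← volterraConv_congr ht.1 (hext_eq β t ht) (hgH t ht),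
      volterraConv_eq_integral_mul_sub β]
    rfl

theorem stmt_13 (L C : ℝ) (hL : 0 < L) (hC : 0 < C)
    (γ₀ : ℝ) (hγ₀ : γ₀ = Real.sqrt (2 / L))
    (lam : ℕ → ℝ) (hlam : ∀ n : ℕ, lam n = ((n : ℝ) + 1 / 2) * Real.pi / L)
    (g β : ℝ → ℝ) (hg : ContinuousOn g (Set.Icc 0 L)) (hβ : ContinuousOn β (Set.Icc 0 L))
    (z M : ℕ → ℝ → ℝ)
    (hzc : ∀ n ≥ 1, ContinuousOn (z n) (Set.Icc 0 L))
    (hMc : ∀ n ≥ 1, ContinuousOn (M n) (Set.Icc 0 L))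
    (hMb : ∀ n ≥ 1, ∀ t ∈ Set.Icc (0:ℝ) L, |M n t| ≤ C)
    (hzform : ∀ n ≥ 1, ∀ t ∈ Set.Icc (0:ℝ) L,
      z n t = Real.cos (lam n * t) + M n t / lam n)
    (θ : ℕ → ℝ → ℝ)
    (hθ : ∀ n ≥ 1, ∀ t : ℝ,
      θ n t = (γ₀ / lam n) * (∫ s in (0:ℝ)..t, g s)
        - (γ₀ / lam n) *
            ∫ s in (0:ℝ)..t, g (t - s) * (z n s + ∫ r in (0:ℝ)..s, β (s - r) * z n r))
    (H : ℝ → ℝ)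
    (hHL2 : MeasureTheory.MemLp H 2 (MeasureTheory.volume.restrict (Set.Ioc 0 L)))
    (hHlim : Tendsto (fun N : ℕ => ∫ t in (0:ℝ)..L,
        ((∑ n ∈ Finset.Icc 1 N, (-1 : ℝ) ^ n * (γ₀ / lam n) * z n t) - H t) ^ 2)
      atTop (nhds 0)) :
    Tendsto (fun N : ℕ => ∑ n ∈ Finset.Icc 1 N, (-1 : ℝ) ^ n / lam n)
        atTop (nhds ((L / Real.pi) * (Real.pi / 2 - 2)))
    ∧ Tendsto (fun N : ℕ => ∫ t in (0:ℝ)..L,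
        ((∑ n ∈ Finset.Icc 1 N, (-1 : ℝ) ^ n * γ₀ * θ n t)
          - ((γ₀ ^ 2 * ((L / Real.pi) * (Real.pi / 2 - 2))) * (∫ s in (0:ℝ)..t, g s)
            - γ₀ * (∫ s in (0:ℝ)..t, g (t - s) * H s)
            - γ₀ * ∫ s in (0:ℝ)..t,
                β s * ∫ r in (0:ℝ)..(t - s), g (t - s - r) * H r)) ^ 2)
      atTop (nhds 0) :=
  stmt_13_general L hL γ₀ lam hlam g β hg hβ z hzc θ hθ H hHL2 hHlim
end
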